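/- arXiv:2005.01154 — 2 statements merged into one kernel-verified Lean document; each statement's English description precedes it below -/
import Mathlib

section
/- Let D(z) be an invertible Hasse–Schmidt derivation on ⋀V with inverse D̄(z). Then the inverse D̄(z) is itself a Hasse–Schmidt derivation, i.e. D̄(z)(u ∧ v) = D̄(z)u ∧ D̄(z)v for all u, v ∈ ⋀V. -/
noncomputable section
open Finset

variable {W : Type} [AddCommGroup W] [Module ℚ W]

/-- apply a formal power series of endomorphisms of `⋀W` to a single element,
obtaining a formal power series `D(z)u` with coefficients in `⋀W`. -/
def applyPS (D : PowerSeries (Module.End ℚ (ExteriorAlgebra ℚ W)))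
    (u : ExteriorAlgebra ℚ W) : PowerSeries (ExteriorAlgebra ℚ W) :=
  PowerSeries.mk fun n => (PowerSeries.coeff n D) u

/-- the `z`-linear extension of `D(z)` to power series with coefficients in `⋀W`
(Cauchy product of the coefficients). -/
def actPS (D : PowerSeries (Module.End ℚ (ExteriorAlgebra ℚ W)))
    (f : PowerSeries (ExteriorAlgebra ℚ W)) : PowerSeries (ExteriorAlgebra ℚ W) :=
  PowerSeries.mk fun n =>
    ∑ p ∈ Finset.HasAntidiagonal.antidiagonal n, (PowerSeries.coeff p.1 D) ((PowerSeries.coeff p.2 f))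

/-
The Hasse–Schmidt property of `D(z)` says that it intertwines left multiplications:
`D(z) ∘ L_u = L_{D(z)u} ∘ D(z)` in `End(⋀V)[[z]]`, where `L_u` is left multiplication by `u`.
Extending `z`-linearly, `D(z) ∘ L_{E(z)u} = L_{(DE)(z)u} ∘ D(z)` for every series `E(z)`.
For `E = D̄` this reads `D ∘ L_{D̄u} = L_u ∘ D`, and conjugating by `D̄` gives
`D̄ ∘ L_u = L_{D̄u} ∘ D̄`, which is the Hasse–Schmidt property of `D̄(z)`.
-/

open PowerSeries

-- Both sides sum over `a + b + q = n`; the reindexing `((p, q), (a, b)) ↦ ((a + q, b), (a, q))`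
-- between them is its own inverse.
theorem sum_antidiagonal_antidiagonal_fst_exchange {M : Type*} [AddCommMonoid M] (n : ℕ)
    (F : ℕ → ℕ → ℕ → M) :
    ∑ pq ∈ antidiagonal n, ∑ ab ∈ antidiagonal pq.1, F ab.1 ab.2 pq.2
      = ∑ sb ∈ antidiagonal n, ∑ aq ∈ antidiagonal sb.1, F aq.1 sb.2 aq.2 := by
  simp only [Finset.sum_sigma']
  refine Finset.sum_nbij' (fun x => ⟨(x.2.1 + x.1.2, x.2.2), (x.2.1, x.1.2)⟩)
    (fun x => ⟨(x.2.1 + x.1.2, x.2.2), (x.2.1, x.1.2)⟩) ?_ ?_ ?_ ?_ ?_ <;>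
    rintro ⟨⟨p, q⟩, ⟨a, b⟩⟩ hx <;>
    simp only [Finset.mem_sigma, HasAntidiagonal.mem_antidiagonal, Sigma.mk.inj_iff,
      Prod.mk.injEq, heq_eq_eq, and_true] at hx ⊢ <;>
    omega

def IsHasseSchmidt (D : PowerSeries (Module.End ℚ (ExteriorAlgebra ℚ W))) : Prop :=
  ∀ u v : ExteriorAlgebra ℚ W, applyPS D (u * v) = applyPS D u * applyPS D v

def mulLeftPS :
    PowerSeries (ExteriorAlgebra ℚ W) →+* PowerSeries (Module.End ℚ (ExteriorAlgebra ℚ W)) :=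
  PowerSeries.map (Algebra.lmul ℚ (ExteriorAlgebra ℚ W)).toRingHom

@[simp]
lemma coeff_applyPS (D : PowerSeries (Module.End ℚ (ExteriorAlgebra ℚ W)))
    (u : ExteriorAlgebra ℚ W) (n : ℕ) : coeff n (applyPS D u) = coeff n D u :=
  coeff_mk _ _

@[simp]
lemma coeff_mulLeftPS_apply (f : PowerSeries (ExteriorAlgebra ℚ W)) (n : ℕ)
    (v : ExteriorAlgebra ℚ W) : coeff n (mulLeftPS f) v = coeff n f * v := by
  simp [mulLeftPS]

lemma applyPS_one (u : ExteriorAlgebra ℚ W) : applyPS 1 u = C u := by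
  ext n
  rw [coeff_applyPS, coeff_one, coeff_C]
  split_ifs <;> rfl

lemma mulLeftPS_C (u : ExteriorAlgebra ℚ W) : mulLeftPS (C u) = C (Algebra.lmul ℚ _ u) :=
  map_C _ _

lemma applyPS_mul_C (D : PowerSeries (Module.End ℚ (ExteriorAlgebra ℚ W)))
    (T : Module.End ℚ (ExteriorAlgebra ℚ W)) (v : ExteriorAlgebra ℚ W) :
    applyPS (D * C T) v = applyPS D (T v) := by
  ext n
  simp [coeff_mul_C]

lemma applyPS_mulLeftPS_mul (f : PowerSeries (ExteriorAlgebra ℚ W))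
    (E : PowerSeries (Module.End ℚ (ExteriorAlgebra ℚ W))) (v : ExteriorAlgebra ℚ W) :
    applyPS (mulLeftPS f * E) v = f * applyPS E v := by
  ext n
  simp [coeff_mul, LinearMap.sum_apply]

namespace IsHasseSchmidt

variable {D : PowerSeries (Module.End ℚ (ExteriorAlgebra ℚ W))}

lemma coeff_apply_mul (hD : IsHasseSchmidt D) (p : ℕ) (x y : ExteriorAlgebra ℚ W) :
    coeff p D (x * y) = ∑ ab ∈ antidiagonal p, coeff ab.1 D x * coeff ab.2 D y := by
  simpa [coeff_mul] using congrArg (coeff p) (hD x y)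

lemma mul_mulLeftPS_applyPS (hD : IsHasseSchmidt D)
    (E : PowerSeries (Module.End ℚ (ExteriorAlgebra ℚ W))) (u : ExteriorAlgebra ℚ W) :
    D * mulLeftPS (applyPS E u) = mulLeftPS (applyPS (D * E) u) * D := by
  ext n : 1
  refine LinearMap.ext fun v => ?_
  simp only [coeff_mul, LinearMap.sum_apply, Module.End.mul_apply, coeff_mulLeftPS_apply,
    coeff_applyPS, hD.coeff_apply_mul, Finset.sum_mul]
  exact sum_antidiagonal_antidiagonal_fst_exchange n
    fun a b q => coeff a D (coeff q E u) * coeff b D v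

end IsHasseSchmidt

lemma isHasseSchmidt_of_mul_C_lmul {D : PowerSeries (Module.End ℚ (ExteriorAlgebra ℚ W))}
    (h : ∀ u, D * C (Algebra.lmul ℚ _ u) = mulLeftPS (applyPS D u) * D) : IsHasseSchmidt D := by
  intro u v
  simpa [applyPS_mul_C, applyPS_mulLeftPS_mul] using congrArg (applyPS · v) (h u)

theorem inverse_is_hasseSchmidt_general
    (D Dbar : PowerSeries (Module.End ℚ (ExteriorAlgebra ℚ W)))
    (hHS : ∀ u v : ExteriorAlgebra ℚ W, applyPS D (u * v) = applyPS D u * applyPS D v)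
    (hinv₁ : D * Dbar = 1) (hinv₂ : Dbar * D = 1) :
    ∀ u v : ExteriorAlgebra ℚ W,
      applyPS Dbar (u * v) = applyPS Dbar u * applyPS Dbar v := by
  refine isHasseSchmidt_of_mul_C_lmul fun u => ?_
  have hcomm : D * mulLeftPS (applyPS Dbar u) = C (Algebra.lmul ℚ _ u) * D := by
    rw [IsHasseSchmidt.mul_mulLeftPS_applyPS hHS, hinv₁, applyPS_one, mulLeftPS_C]
  calc Dbar * C (Algebra.lmul ℚ _ u)
      = Dbar * (C (Algebra.lmul ℚ _ u) * D) * Dbar := by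
        rw [mul_assoc, mul_assoc, hinv₁, mul_one]
    _ = mulLeftPS (applyPS Dbar u) * Dbar := by
        rw [← hcomm, ← mul_assoc, hinv₂, one_mul]

/-- the inverse `D̄(z)` of an invertible Hasse–Schmidt derivation `D(z)`
(with invertible degree-zero coefficient) is again a Hasse–Schmidt derivation. -/
theorem inverse_is_hasseSchmidt
    (D Dbar : PowerSeries (Module.End ℚ (ExteriorAlgebra ℚ W)))
    (hHS : ∀ u v : ExteriorAlgebra ℚ W, applyPS D (u * v) = applyPS D u * applyPS D v)
    (h0 : IsUnit (PowerSeries.constantCoeff D))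
    (hinv₁ : D * Dbar = 1) (hinv₂ : Dbar * D = 1) :
    ∀ u v : ExteriorAlgebra ℚ W,
      applyPS Dbar (u * v) = applyPS Dbar u * applyPS Dbar v :=
  inverse_is_hasseSchmidt_general D Dbar hHS hinv₁ hinv₂
end
end

section
/- Let λ be a partition with at most r parts and λ_r = 0 (length < r). Then σ̄_-(w) σ_+(z) [b]^r_λ = (1 − z/w) σ_+(z) σ̄_-(w) [b]^r_λ in ⋀^r V[[z]][w^{-1}]. -/
noncomputable section
open Finset

abbrev Vb : Type := ℕ →₀ ℚ
abbrev ExtV : Type := ExteriorAlgebra ℚ Vb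

/-- basis vectors `b_i` inside the exterior algebra -/
def bv (i : ℕ) : ExtV := ExteriorAlgebra.ι ℚ (Finsupp.single i (1:ℚ))

/-- the family of coefficients of a Hasse–Schmidt derivation with `D 0` acting as
the identity on scalars -/
def IsHSFamily (D : ℕ → Module.End ℚ ExtV) : Prop :=
  (∀ (i : ℕ) (u v : ExtV), D i (u * v) = ∑ p ∈ Finset.HasAntidiagonal.antidiagonal i, D p.1 u * D p.2 v) ∧
  (∀ i : ℕ, D i (1 : ExtV) = if i = 0 then 1 else 0)

/-- `σ₊(z)`, via `σ₊(z) b_j = ∑_i b_{j+i} z^i` -/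
def IsSigmaPlus (D : ℕ → Module.End ℚ ExtV) : Prop :=
  IsHSFamily D ∧ ∀ i j : ℕ, D i (bv j) = bv (j + i)

/-- `σ₋(w)` (coefficients of `w^{-i}`), via `σ₋(w) b_j = ∑_i b_{j-i} w^{-i}` -/
def IsSigmaMinus (D : ℕ → Module.End ℚ ExtV) : Prop :=
  IsHSFamily D ∧ ∀ i j : ℕ, D i (bv j) = if i ≤ j then bv (j - i) else 0

/-- `σ̄₊(z)`, via `σ̄₊(z) b_j = b_j - b_{j+1} z` -/
def IsSigmaBarPlus (D : ℕ → Module.End ℚ ExtV) : Prop :=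
  IsHSFamily D ∧ ∀ i j : ℕ, D i (bv j) =
    if i = 0 then bv j else if i = 1 then -bv (j+1) else 0

/-- `σ̄₋(w)` (coefficients of `w^{-i}`), via `σ̄₋(w) b_j = b_j - b_{j-1} w^{-1}`, `b_{-1}=0` -/
def IsSigmaBarMinus (D : ℕ → Module.End ℚ ExtV) : Prop :=
  IsHSFamily D ∧ ∀ i j : ℕ, D i (bv j) =
    if i = 0 then bv j else if i = 1 then (if j = 0 then 0 else -bv (j-1)) else 0

/-- `[b]^r_λ = b_{r-1+λ₁} ∧ ⋯ ∧ b_{λ_r}` -/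
def wedgeB (r : ℕ) (lam : Fin r → ℕ) : ExtV :=
  (List.ofFn fun i : Fin r => bv ((r - 1 - (i : ℕ)) + lam i)).prod

/-- the dual basis element `β_j ∈ V*` -/
def betaF (j : ℕ) : Module.Dual ℚ Vb := Finsupp.lapply j

/-- contraction `β_j ⌟ ·` on the exterior algebra -/
def ctr (j : ℕ) : ExtV →ₗ[ℚ] ExtV :=
  CliffordAlgebra.contractLeft (Q := (0 : QuadraticForm ℚ Vb)) (betaF j)

/-! Both `σ̄₋(w) σ₊(z)` and `σ₊(z) σ̄₋(w)` are composites of Hasse–Schmidt derivations, hence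
multiplicative on `⋀V`. They agree on every `b_j` with `j ≥ 1`, while on `b_0` the first equals
`1 - z/w` times the second, because `σ̄₋(w)` kills `b_{-1} = 0` but not `σ₊(z) b_0 = ∑ b_i z^i`.
When `λ_r = 0` the wedge `[b]^r_λ` has `b_0` as its last factor and `b_j`, `j ≥ 1`, everywhere
else, and `1 - z/w` is central. -/

section DoubleSeries

variable {A : Type*} [Semiring A]

def IsHSFamily₂ (F : ℕ → ℕ → A → A) : Prop :=
  ∀ n m u v, F n m (u * v) =
    ∑ p ∈ antidiagonal n, ∑ q ∈ antidiagonal m, F p.1 q.1 u * F p.2 q.2 v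

def doubleSeries (F : ℕ → ℕ → A → A) (x : A) : PowerSeries (PowerSeries A) :=
  PowerSeries.mk fun n => PowerSeries.mk fun m => F n m x

@[simp]
lemma coeff_coeff_doubleSeries (F : ℕ → ℕ → A → A) (x : A) (n m : ℕ) :
    PowerSeries.coeff m (PowerSeries.coeff n (doubleSeries F x)) = F n m x := by
  simp [doubleSeries]

lemma IsHSFamily₂.swap {F : ℕ → ℕ → A → A} (hF : IsHSFamily₂ F) :
    IsHSFamily₂ fun n m => F m n := fun n m u v => by
  simp only [hF m n u v, Finset.sum_comm (s := antidiagonal m)]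

lemma IsHSFamily₂.doubleSeries_mul {F : ℕ → ℕ → A → A} (hF : IsHSFamily₂ F) (u v : A) :
    doubleSeries F (u * v) = doubleSeries F u * doubleSeries F v := by
  ext n m
  simp only [coeff_coeff_doubleSeries, PowerSeries.coeff_mul, map_sum]
  exact hF n m u v

end DoubleSeries

lemma IsHSFamily.comp {D E : ℕ → Module.End ℚ ExtV} (hD : IsHSFamily D) (hE : IsHSFamily E) :
    IsHSFamily₂ fun n m x => E m (D n x) := fun n m u v => by
  simp only [hD.1, map_sum, hE.1]

lemma commute_one_sub_X_mul_C_X {R : Type*} [Ring R] (f : PowerSeries (PowerSeries R)) :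
    Commute (1 - PowerSeries.X * PowerSeries.C (R := PowerSeries R) PowerSeries.X) f := by
  have hCX : Commute (PowerSeries.C (R := PowerSeries R) PowerSeries.X) f := by
    ext n : 1
    rw [PowerSeries.coeff_C_mul, PowerSeries.coeff_mul_C]
    exact (PowerSeries.commute_X _).symm.eq
  exact (Commute.one_left f).sub_left ((PowerSeries.commute_X f).symm.mul_left hCX)

lemma map_list_prod_mul_eq_mul_of_commute {M N : Type*} [Monoid M] [Monoid N] {Φ Ψ : M → N}
    (hΦ : ∀ a b, Φ (a * b) = Φ a * Φ b) (hΨ : ∀ a b, Ψ (a * b) = Ψ a * Ψ b)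
    {c : N} (hc : ∀ y, Commute c y) {L : List M} (hL : ∀ a ∈ L, Φ a = Ψ a) {x : M}
    (hx : Φ x = c * Ψ x) : Φ (L.prod * x) = c * Ψ (L.prod * x) := by
  induction L with
  | nil => simpa using hx
  | cons a L ih =>
    rw [List.prod_cons, mul_assoc, hΦ, hΨ, ih fun b hb => hL b (List.mem_cons_of_mem a hb),
      hL a List.mem_cons_self, ← mul_assoc, ← (hc _).eq, mul_assoc]

section Generators

variable {Sp Sbm : ℕ → Module.End ℚ ExtV} (hSp : IsSigmaPlus Sp) (hSbm : IsSigmaBarMinus Sbm)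
include hSp hSbm

lemma sbarMinus_sigmaPlus_bv_of_pos {j : ℕ} (hj : 1 ≤ j) :
    doubleSeries (fun n m x => Sbm m (Sp n x)) (bv j) =
      doubleSeries (fun n m x => Sp n (Sbm m x)) (bv j) := by
  ext n m
  have hshift : j + n - 1 = j - 1 + n := by omega
  rcases m with _ | _ | m <;>
    simp [hSbm.2, hSp.2, hshift, show j ≠ 0 by omega]

lemma sbarMinus_sigmaPlus_bv_zero :
    doubleSeries (fun n m x => Sbm m (Sp n x)) (bv 0) =
      (1 - PowerSeries.X * PowerSeries.C PowerSeries.X) *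
        doubleSeries (fun n m x => Sp n (Sbm m x)) (bv 0) := by
  ext n m
  rw [one_sub_mul, map_sub, map_sub, mul_assoc]
  rcases n with _ | n
  · rw [PowerSeries.coeff_zero_X_mul, map_zero, sub_zero, coeff_coeff_doubleSeries,
      coeff_coeff_doubleSeries]
    rcases m with _ | _ | m <;> simp [hSbm.2, hSp.2]
  · rw [PowerSeries.coeff_succ_X_mul, PowerSeries.coeff_C_mul]
    rcases m with _ | _ | m <;> simp [hSbm.2, hSp.2, PowerSeries.coeff_succ_X_mul]

end Generators

lemma wedgeB_eq_prod_mul_bv_zero (s : ℕ) (lam : Fin (s + 1) → ℕ) (hlast : lam (Fin.last s) = 0) :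
    wedgeB (s + 1) lam = (List.ofFn fun i : Fin s => bv (s - i + lam i.castSucc)).prod * bv 0 := by
  rw [wedgeB, List.ofFn_succ', List.prod_concat]
  simp [hlast]

/-- The outer power series variable is `z`, the inner one is `t = w^{-1}`. -/
theorem sbarMinus_sigmaPlus_short_length_general
    (r : ℕ) (hr : 0 < r) (lam : Fin r → ℕ)
    (hlast : ∀ i : Fin r, (i : ℕ) = r - 1 → lam i = 0)
    (Sp Sbm : ℕ → Module.End ℚ ExtV)
    (hSp : IsSigmaPlus Sp) (hSbm : IsSigmaBarMinus Sbm) :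
    (PowerSeries.mk fun n => PowerSeries.mk fun m => Sbm m (Sp n (wedgeB r lam))
      : PowerSeries (PowerSeries ExtV))
    = (1 - PowerSeries.X * PowerSeries.C (R := PowerSeries ExtV) PowerSeries.X) *
        PowerSeries.mk fun n => PowerSeries.mk fun m => Sp n (Sbm m (wedgeB r lam)) := by
  obtain ⟨s, rfl⟩ : ∃ s, r = s + 1 := ⟨r - 1, by omega⟩
  change doubleSeries (fun n m x => Sbm m (Sp n x)) _ =
    _ * doubleSeries (fun n m x => Sp n (Sbm m x)) _
  rw [wedgeB_eq_prod_mul_bv_zero s lam (hlast _ (by simp))]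
  refine map_list_prod_mul_eq_mul_of_commute (hSp.1.comp hSbm.1).doubleSeries_mul
    (hSbm.1.comp hSp.1).swap.doubleSeries_mul commute_one_sub_X_mul_C_X ?_
    (sbarMinus_sigmaPlus_bv_zero hSp hSbm)
  simp only [List.mem_ofFn]
  rintro _ ⟨i, rfl⟩
  exact sbarMinus_sigmaPlus_bv_of_pos hSp hSbm (by omega)

/-- if `λ` has at most `r` parts and `λ_r = 0`, then
`σ̄₋(w) σ₊(z) [b]^r_λ = (1 - z/w) σ₊(z) σ̄₋(w) [b]^r_λ` in `⋀^r V[[z]][w^{-1}]`.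
The outer power series variable is `z`, the inner one is `t = w^{-1}`. -/
theorem sbarMinus_sigmaPlus_short_length
    (r : ℕ) (hr : 0 < r) (lam : Fin r → ℕ) (hlam : Antitone lam)
    (hlast : ∀ i : Fin r, (i : ℕ) = r - 1 → lam i = 0)
    (Sp Sbm : ℕ → Module.End ℚ ExtV)
    (hSp : IsSigmaPlus Sp) (hSbm : IsSigmaBarMinus Sbm) :
    (PowerSeries.mk fun n => PowerSeries.mk fun m => Sbm m (Sp n (wedgeB r lam))
      : PowerSeries (PowerSeries ExtV))
    = (1 - PowerSeries.X * PowerSeries.C (R := PowerSeries ExtV) PowerSeries.X) *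
        PowerSeries.mk fun n => PowerSeries.mk fun m => Sp n (Sbm m (wedgeB r lam)) :=
  sbarMinus_sigmaPlus_short_length_general r hr lam hlast Sp Sbm hSp hSbm
end
end
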